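/- Let N_d ≥ 2 be an integer, let N_p = N_d − 1, and let i be a real number with cos i > −N_p/N_d. Then the relative trajectory p in a retrograde rotating frame is not injective on [0,1); i.e., the relative trajectory self-intersects. -/

import Mathlib

open Real

/-- The relative trajectory in a retrograde rotating frame: ascending node longitude
`Θ = 2π N_d τ`, argument of latitude `u = 2π N_p τ`, inclination `i`, unit radius. -/
noncomputable def retrogradeTrajectory (Nd Np : ℕ) (i : ℝ) (τ : ℝ) : ℝ × ℝ × ℝ :=
  let Θ : ℝ := 2 * π * Nd * τ
  let u : ℝ := 2 * π * Np * τ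
  (Real.cos Θ * Real.cos u - Real.sin Θ * Real.sin u * Real.cos i,
   Real.sin Θ * Real.cos u + Real.cos Θ * Real.sin u * Real.cos i,
   Real.sin u * Real.sin i)

/-!
Take the two times at which the argument of latitude is `π/2 ± v`. Their heights agree, and their
horizontal positions agree as soon as `g v = cos (κ v) sin v + cos i · sin (κ v) cos v` vanishes,
where `κ = N_d / N_p`. Now `g 0 = 0`, `g' 0 = 1 + κ cos i > 0` by the hypothesis on `i`, and
`g (π/2) = cos (κ π/2) < 0` because `1 < κ ≤ 2`; so `g` has a zero in `(0, π/2)`, which yields two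
distinct times in `[0, 1)` with the same position.
-/

open Set Filter Topology

theorem exists_mem_Ioo_eq_zero_of_hasDerivWithinAt_pos {g : ℝ → ℝ} {a b d : ℝ} (hab : a < b)
    (hg : ContinuousOn g (Icc a b)) (hga : g a = 0) (hd : HasDerivWithinAt g d (Ioi a) a)
    (hd_pos : 0 < d) (hgb : g b < 0) : ∃ v ∈ Ioo a b, g v = 0 := by
  have hslope : Tendsto (slope g a) (𝓝[>] a) (𝓝 d) :=
    (hasDerivWithinAt_iff_tendsto_slope' (lt_irrefl a)).mp hd
  obtain ⟨w, ⟨hw_slope, hwb⟩, haw⟩ :=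
    ((hslope.eventually (eventually_gt_nhds hd_pos)).and
      (nhdsWithin_le_nhds (Iio_mem_nhds hab))).and self_mem_nhdsWithin |>.exists
  have hgw : 0 < g w := by rwa [slope_pos_iff_of_le (le_of_lt haw), hga] at hw_slope
  obtain ⟨v, hv, hgv⟩ := intermediate_value_Icc' hwb.le (hg.mono (Icc_subset_Icc_left haw.le))
    ⟨hgb.le, hgw.le⟩
  exact ⟨v, ⟨haw.trans_le hv.1, hv.2.lt_of_ne (by rintro rfl; exact hgb.ne hgv)⟩, hgv⟩

noncomputable def retrogradeCrossingFun (κ c v : ℝ) : ℝ :=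
  cos (κ * v) * sin v + c * sin (κ * v) * cos v

theorem hasDerivAt_retrogradeCrossingFun_zero (κ c : ℝ) :
    HasDerivAt (retrogradeCrossingFun κ c) (1 + c * κ) 0 := by
  have hlin : HasDerivAt (fun v : ℝ => κ * v) κ 0 := by
    simpa using (hasDerivAt_id (0 : ℝ)).const_mul κ
  refine ((((hasDerivAt_cos _).comp 0 hlin).mul (hasDerivAt_sin 0)).add
    ((((hasDerivAt_sin _).comp 0 hlin).const_mul c).mul (hasDerivAt_cos 0))).congr_deriv ?_
  simp

theorem exists_retrogradeCrossingFun_eq_zero {κ c : ℝ} (hκ₁ : 1 < κ) (hκ₃ : κ < 3)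
    (hc : 0 < 1 + c * κ) : ∃ v ∈ Ioo 0 (π / 2), retrogradeCrossingFun κ c v = 0 := by
  refine exists_mem_Ioo_eq_zero_of_hasDerivWithinAt_pos (by positivity)
    (by unfold retrogradeCrossingFun; fun_prop) (by simp [retrogradeCrossingFun])
    (hasDerivAt_retrogradeCrossingFun_zero κ c).hasDerivWithinAt hc ?_
  simp only [retrogradeCrossingFun, cos_pi_div_two, sin_pi_div_two, mul_zero, add_zero, mul_one]
  apply cos_neg_of_pi_div_two_lt_of_lt <;> nlinarith [pi_pos]

theorem retrogradeTrajectory_eq_of_retrogradeCrossingFun_eq_zero {Nd Np : ℕ} (hNp : Np ≠ 0)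
    {i v : ℝ} (hv : retrogradeCrossingFun ((Nd : ℝ) / Np) (cos i) v = 0) :
    retrogradeTrajectory Nd Np i ((π / 2 + v) / (2 * π * Np)) =
      retrogradeTrajectory Nd Np i ((π / 2 - v) / (2 * π * Np)) := by
  set κ : ℝ := (Nd : ℝ) / Np
  have hNp' : (Np : ℝ) ≠ 0 := Nat.cast_ne_zero.mpr hNp
  have hΘ (x : ℝ) : 2 * π * Nd * (x / (2 * π * Np)) = κ * x := by
    simp only [κ]; field_simp
  have hu (x : ℝ) : 2 * π * Np * (x / (2 * π * Np)) = x := by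
    field_simp
  unfold retrogradeTrajectory retrogradeCrossingFun at *
  simp only [hΘ, hu, mul_add, mul_sub, cos_add, sin_add, cos_sub, sin_sub, cos_pi_div_two,
    sin_pi_div_two]
  refine Prod.ext ?_ (Prod.ext ?_ ?_)
  · linear_combination (-2 * cos (κ * (π / 2))) * hv
  · linear_combination (-2 * sin (κ * (π / 2))) * hv
  · ring

theorem div_two_pi_mul_natCast_mem_Ico {n : ℕ} (hn : n ≠ 0) {x : ℝ} (hx₀ : 0 ≤ x)
    (hx : x < 2 * π) : x / (2 * π * n) ∈ Ico (0 : ℝ) 1 := by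
  have hn₁ : (1 : ℝ) ≤ n := by exact_mod_cast Nat.one_le_iff_ne_zero.mpr hn
  refine ⟨by positivity, (div_lt_one (by positivity)).mpr ?_⟩
  nlinarith [pi_pos]

/-- Theorem 2, necessity, case `α < 0`, `N_p = N_d - 1`: if `cos i > -N_p/N_d`,
the retrograde relative trajectory self-intersects. -/
theorem retrograde_not_injOn_of_cos_gt (Nd Np : ℕ) (hNd : 2 ≤ Nd) (hNp : Np = Nd - 1)
    (i : ℝ) (hi : -((Np : ℝ) / Nd) < Real.cos i) :
    ¬ Set.InjOn (retrogradeTrajectory Nd Np i) (Set.Ico 0 1) := by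
  have hNp₀ : Np ≠ 0 := by omega
  have hNd_eq : (Nd : ℝ) = Np + 1 := by exact_mod_cast (show Nd = Np + 1 by omega)
  have hNp₁ : (1 : ℝ) ≤ Np := by exact_mod_cast Nat.one_le_iff_ne_zero.mpr hNp₀
  have hκ₁ : 1 < (Nd : ℝ) / Np := by rw [lt_div_iff₀ (by positivity), hNd_eq]; linarith
  have hκ₃ : (Nd : ℝ) / Np < 3 := by rw [div_lt_iff₀ (by positivity), hNd_eq]; linarith
  have hc : 0 < 1 + cos i * ((Nd : ℝ) / Np) := by
    have h := (lt_div_iff₀ (by positivity)).mp (neg_lt.mp hi)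
    have h' : 1 + cos i * ((Nd : ℝ) / Np) = (Np + cos i * Nd) / Np := by field_simp
    rw [h']
    exact div_pos (by linarith) (by positivity)
  obtain ⟨v, ⟨hv₀, hv⟩, hcross⟩ := exists_retrogradeCrossingFun_eq_zero hκ₁ hκ₃ hc
  intro hinj
  have hτ := hinj (div_two_pi_mul_natCast_mem_Ico hNp₀ (by linarith) (by linarith))
    (div_two_pi_mul_natCast_mem_Ico hNp₀ (by linarith) (by linarith))
    (retrogradeTrajectory_eq_of_retrogradeCrossingFun_eq_zero hNp₀ hcross)
  have hu_eq := (div_left_inj' (by positivity)).mp hτ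
  linarith
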